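/- Let γ ∈ (0,1), Q ≥ 4. Define p₂* = 1 + 2/Q and p₂** = max{(γ-γ²+1)/(γ(2-γ)), 1 + 2/(Q-2+2γ)}. Then p₂* < p₂**. -/

import Mathlib

theorem stmt_7 (γ Q : ℝ) (hγ0 : 0 < γ) (hγ1 : γ < 1) (hQ : 4 ≤ Q) :
    1 + 2 / Q < max ((γ - γ ^ 2 + 1) / (γ * (2 - γ))) (1 + 2 / (Q - 2 + 2 * γ)) := by
  refine lt_max_of_lt_right ?_
  have hpos : 0 < Q - 2 + 2 * γ := by linarith
  gcongr
  linarith
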